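/- arXiv:2006.11362 — 6 statements merged into one kernel-verified Lean document; each statement's English description precedes it below -/
import Mathlib

section
/- Under Mallows' model with n i.i.d. samples, for any alternative a, any ranking h₁ ∈ ℒ(𝒜) in which a is not ranked at the top, and any 0<α<1, let B = {b ∈ 𝒜 : b ≻_{h₁} a} be the set of alternatives ranked above a in h₁. Then there exist K ∈ ℝ and Γ ∈ [0,1] such that the test f defined on profiles P ∈ ℒ(𝒜)^n by f(P)=1 if w_P(B≻a)>K, f(P)=0 if w_P(B≻a)<K, and f(P)=Γ if w_P(B≻a)=K, has Size(f)=α over H₀ = L_{a≻others}, and f is a level-α most powerful test for H₀ = L_{a≻others} vs the simple alternative h₁. -/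
namespace Voting

open Finset

section Generic

variable {S Θ : Type*} [Fintype S] [Fintype Θ]

/-- `Size π f θ` : the probability that test `f` rejects when the ground truth is `θ`. -/
noncomputable def Size (π : Θ → S → ℝ) (f : S → ℝ) (θ : Θ) : ℝ :=
  ∑ P, π θ P * f P

/-- `Power π f θ` : the power of test `f` at parameter `θ`. -/
noncomputable def Power (π : Θ → S → ℝ) (f : S → ℝ) (θ : Θ) : ℝ :=
  ∑ P, π θ P * f P

/-- A (randomized) test is a critical function with values in `[0,1]`. -/
def IsTest (f : S → ℝ) : Prop := ∀ P, 0 ≤ f P ∧ f P ≤ 1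

/-- `Size(f) ≤ α` over the null hypothesis `H0`. -/
def SizeLe (π : Θ → S → ℝ) (H0 : Set Θ) (f : S → ℝ) (α : ℝ) : Prop :=
  ∀ h0 ∈ H0, Size π f h0 ≤ α

/-- `Size(f) = α` over the null hypothesis `H0` (the max over `H0` equals `α`). -/
def SizeEq (π : Θ → S → ℝ) (H0 : Set Θ) (f : S → ℝ) (α : ℝ) : Prop :=
  SizeLe π H0 f α ∧ ∃ h0 ∈ H0, Size π f h0 = α

/-- `f` is a level-`α` most powerful test for `H0` vs the simple alternative `h1`. -/
def IsMostPowerful (π : Θ → S → ℝ) (H0 : Set Θ) (h1 : Θ) (α : ℝ) (f : S → ℝ) : Prop :=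
  IsTest f ∧ SizeLe π H0 f α ∧
    ∀ g : S → ℝ, IsTest g → SizeLe π H0 g α → Power π g h1 ≤ Power π f h1

/-- `f` is a level-`α` uniformly most powerful test for `H0` vs `H1`. -/
def IsUMP (π : Θ → S → ℝ) (H0 H1 : Set Θ) (α : ℝ) (f : S → ℝ) : Prop :=
  ∀ h1 ∈ H1, IsMostPowerful π H0 h1 α f

end Generic

/-- A ranking over `m` alternatives: `V a` is the position of alternative `a`
(smaller position = more preferred), i.e. `a ≻_V b ↔ V a < V b`. -/
abbrev Ranking (m : ℕ) := Equiv.Perm (Fin m)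

/-- Kendall-tau distance: the number of (unordered) pairs on which `V` and `W` disagree. -/
def KT {m : ℕ} (V W : Ranking m) : ℕ :=
  (Finset.univ.filter (fun p : Fin m × Fin m => V p.1 < V p.2 ∧ W p.2 < W p.1)).card

/-- Mallows' single-sample probability of `V` given ground truth `W` and dispersion `φ`. -/
noncomputable def mallows1 {m : ℕ} (φ : ℝ) (W V : Ranking m) : ℝ :=
  φ ^ KT V W / ∑ U : Ranking m, φ ^ KT U W

/-- Mallows' model with `n` i.i.d. samples. -/
noncomputable def mallows {m : ℕ} (φ : ℝ) (n : ℕ) :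
    Ranking m → (Fin n → Ranking m) → ℝ :=
  fun W P => ∏ i, mallows1 φ W (P i)

/-- `L_{a≻others}` : rankings in which `a` is ranked at the top. -/
def Ltop {m : ℕ} (a : Fin m) : Set (Ranking m) := {V | ∀ b, b ≠ a → V a < V b}

/-- `L_{others≻a}` : rankings in which `a` is ranked at the bottom. -/
def Lbot {m : ℕ} (a : Fin m) : Set (Ranking m) := {V | ∀ b, b ≠ a → V b < V a}

/-- `w_P(b≻a)` : the weighted-majority-graph weight on the edge `b → a` of profile `P`. -/
def wpair {m n : ℕ} (P : Fin n → Ranking m) (b a : Fin m) : ℤ :=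
  ((Finset.univ.filter (fun i => P i b < P i a)).card : ℤ) -
    ((Finset.univ.filter (fun i => P i a < P i b)).card : ℤ)

/-- `w_P(B≻a) = Σ_{b∈B} w_P(b≻a)`. -/
def wset {m n : ℕ} (P : Fin n → Ranking m) (B : Finset (Fin m)) (a : Fin m) : ℤ :=
  ∑ b ∈ B, wpair P b a

/-- The threshold test on the statistic `w_P(B≻a)` with threshold `K`/randomization `Γ`. -/
noncomputable def wTest {m : ℕ} (n : ℕ) (B : Finset (Fin m)) (a : Fin m) (K Γ : ℝ) :
    (Fin n → Ranking m) → ℝ :=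
  fun P =>
    if K < ((wset P B a : ℤ) : ℝ) then 1
    else if ((wset P B a : ℤ) : ℝ) < K then 0
    else Γ

/-- The Borda score of `a` in `V`: the number of alternatives ranked below `a`. -/
def Borda {m : ℕ} (a : Fin m) (V : Ranking m) : ℕ :=
  (Finset.univ.filter (fun b => V a < V b)).card

/-!
Let `W` be `h₁` with `a` moved to the top and `B` the set of alternatives above `a` in `h₁`.
Moving `a` past each `b ∈ B` changes the Kendall-tau distance to a sample `V` by `±1` according
to whether `b ≻_V a`, so `KT(V, W) = KT(V, h₁) + w_V(B ≻ a)`. Hence the likelihood ratio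
`π_{h₁} / π_W = φ^(-w_P(B ≻ a))` is increasing in the statistic, and by Neyman–Pearson the
threshold test calibrated to size `α` at `W` is most powerful for `W` against `h₁`.

It remains to see that `W` is the least favourable null. Bubble-sorting any `ω` with `a` on top
into `W` only swaps adjacent alternatives that are both in `B`, both outside `B`, or a non-`B`
one above a `B` one. The first two swaps leave the law of `w_V(B ≻ a)` unchanged, the last one
makes it stochastically larger, and stochastic dominance passes to sums over i.i.d. samples.
-/

section Tests

variable {S : Type*} [Fintype S]

def threshold (K : ℤ) (Γ : ℝ) (t : ℤ) : ℝ :=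
  if K < t then 1 else if t < K then 0 else Γ

lemma threshold_mem_Icc {K : ℤ} {Γ : ℝ} (hΓ0 : 0 ≤ Γ) (hΓ1 : Γ ≤ 1) (t : ℤ) :
    0 ≤ threshold K Γ t ∧ threshold K Γ t ≤ 1 := by
  unfold threshold
  split_ifs <;> constructor <;> linarith

lemma monotone_threshold {K : ℤ} {Γ : ℝ} (hΓ0 : 0 ≤ Γ) (hΓ1 : Γ ≤ 1) :
    Monotone (threshold K Γ) := by
  intro s t hst
  unfold threshold
  split_ifs <;> linarith

lemma threshold_eq_add (K : ℤ) (Γ : ℝ) (t : ℤ) :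
    threshold K Γ t = (if K < t then 1 else 0) + Γ * if t = K then 1 else 0 := by
  unfold threshold
  split_ifs <;> first | (exfalso; omega) | ring

/-- Randomising on the atom `{T = K}` fills the gap between the tail probabilities
`P(T > K) ≤ α < P(T ≥ K)`, where `K` is the least integer with `P(T > K) ≤ α`. -/
lemma exists_threshold_sum_eq (p : S → ℝ) (hp1 : ∑ s, p s = 1)
    (T : S → ℤ) {α : ℝ} (hα0 : 0 ≤ α) (hα1 : α < 1) :
    ∃ K : ℤ, ∃ Γ : ℝ, 0 ≤ Γ ∧ Γ ≤ 1 ∧ ∑ s, p s * threshold K Γ (T s) = α := by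
  set G : ℤ → ℝ := fun t => ∑ s, p s * if t < T s then 1 else 0 with hG
  obtain ⟨L, hL⟩ := (Set.finite_range T).bddBelow
  obtain ⟨U, hU⟩ := (Set.finite_range T).bddAbove
  have hGU : G U ≤ α := by
    have : G U = 0 := Finset.sum_eq_zero fun s _ => by
      rw [if_neg (not_lt.2 (hU ⟨s, rfl⟩)), mul_zero]
    rwa [this]
  have hGlow : ∀ z, G z ≤ α → L ≤ z := by
    intro z hz
    by_contra! hzL
    have : G z = 1 := by
      rw [← hp1]
      exact Finset.sum_congr rfl fun s _ => by
        rw [if_pos (hzL.trans_le (hL ⟨s, rfl⟩)), mul_one]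
    linarith
  obtain ⟨K, hK, hKleast⟩ := Int.exists_least_of_bdd ⟨L, hGlow⟩ ⟨U, hGU⟩
  have hKpred : α < G (K - 1) := lt_of_not_ge fun h => by linarith [hKleast _ h]
  set PK : ℝ := ∑ s, p s * if T s = K then 1 else 0
  have hsplit : G (K - 1) = G K + PK := by
    rw [hG, ← Finset.sum_add_distrib]
    refine Finset.sum_congr rfl fun s _ => ?_
    rw [← mul_add]
    congr 1
    split_ifs <;> first | (exfalso; omega) | norm_num
  have hPK : 0 < PK := by linarith
  refine ⟨K, (α - G K) / PK, div_nonneg (by linarith) hPK.le,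
    (div_le_one hPK).2 (by linarith), ?_⟩
  simp only [threshold_eq_add, mul_add, Finset.sum_add_distrib, mul_left_comm _ ((α - G K) / PK),
    ← Finset.mul_sum]
  rw [div_mul_cancel₀ _ hPK.ne']
  ring

/-- The Neyman–Pearson lemma, for a likelihood ratio `r ∘ T` monotone in the statistic `T`. -/
lemma sum_mul_le_sum_mul_threshold (p₀ p₁ : S → ℝ) (hp₀ : ∀ s, 0 ≤ p₀ s) (T : S → ℤ)
    {r : ℤ → ℝ} (hr : Monotone r) {K : ℤ} (hrK : 0 ≤ r K) (hp₁ : ∀ s, p₁ s = p₀ s * r (T s))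
    (Γ : ℝ) (g : S → ℝ) (hg : IsTest g)
    (hsize : ∑ s, p₀ s * g s ≤ ∑ s, p₀ s * threshold K Γ (T s)) :
    ∑ s, p₁ s * g s ≤ ∑ s, p₁ s * threshold K Γ (T s) := by
  set f : S → ℝ := fun s => threshold K Γ (T s)
  have hpair : ∀ s, 0 ≤ (f s - g s) * (p₁ s - r K * p₀ s) := by
    intro s
    have hdiff : p₁ s - r K * p₀ s = p₀ s * (r (T s) - r K) := by rw [hp₁]; ring
    rw [hdiff]
    rcases lt_trichotomy K (T s) with h | h | h
    · have hf : f s = 1 := if_pos h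
      exact mul_nonneg (by linarith [(hg s).2]) (mul_nonneg (hp₀ s) (by linarith [hr h.le]))
    · simp [h]
    · have hf : f s = 0 := by simp only [f, threshold, if_neg h.not_gt, if_pos h]
      exact mul_nonneg_of_nonpos_of_nonpos (by linarith [(hg s).1])
        (mul_nonpos_of_nonneg_of_nonpos (hp₀ s) (by linarith [hr h.le]))
  have hsplit : ∑ s, p₁ s * f s - ∑ s, p₁ s * g s =
      ∑ s, (f s - g s) * (p₁ s - r K * p₀ s) +
        r K * (∑ s, p₀ s * f s - ∑ s, p₀ s * g s) := by
    simp only [← Finset.sum_sub_distrib, Finset.mul_sum, ← Finset.sum_add_distrib]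
    exact Finset.sum_congr rfl fun s _ => by ring
  have := Finset.sum_nonneg fun s (_ : s ∈ Finset.univ) => hpair s
  linarith [mul_nonneg hrK (sub_nonneg.2 hsize)]

end Tests

section Mallows

variable {m : ℕ}

lemma KT_trans_trans (σ V W : Ranking m) : KT (σ.trans V) (σ.trans W) = KT V W :=
  Finset.card_equiv (σ.prodCongr σ) fun p => by
    simp only [Finset.mem_filter, Finset.mem_univ, true_and]
    rfl

lemma sum_pow_KT_eq (φ : ℝ) (W W' : Ranking m) :
    ∑ U : Ranking m, φ ^ KT U W = ∑ U : Ranking m, φ ^ KT U W' := by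
  have hW : (W'.trans W.symm).trans W = W' := by ext; simp
  rw [← hW]
  exact Fintype.sum_equiv (Equiv.mulRight (W'.trans W.symm)) _ _ fun U => by
    rw [← KT_trans_trans (W'.trans W.symm) U W]; rfl

lemma mallows1_trans_trans (φ : ℝ) (σ W V : Ranking m) :
    mallows1 φ (σ.trans W) (σ.trans V) = mallows1 φ W V := by
  unfold mallows1
  rw [KT_trans_trans, sum_pow_KT_eq φ (σ.trans W) W]

lemma mallows1_nonneg {φ : ℝ} (hφ : 0 < φ) (W V : Ranking m) : 0 ≤ mallows1 φ W V :=
  div_nonneg (pow_pos hφ _).le (Finset.sum_nonneg fun _ _ => (pow_pos hφ _).le)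

lemma sum_mallows1 {φ : ℝ} (hφ : 0 < φ) (W : Ranking m) : ∑ V, mallows1 φ W V = 1 := by
  unfold mallows1
  rw [← Finset.sum_div]
  exact div_self (Finset.sum_pos (fun _ _ => pow_pos hφ _) univ_nonempty).ne'

lemma sum_mallows1_trans_mul (φ : ℝ) (σ W : Ranking m) (h : Ranking m → ℝ)
    (hh : ∀ V, h (σ.trans V) = h V) :
    ∑ V, mallows1 φ (σ.trans W) V * h V = ∑ V, mallows1 φ W V * h V := by
  refine (Fintype.sum_equiv (Equiv.mulRight σ) _ _ fun V => ?_).symm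
  rw [show Equiv.mulRight σ V = σ.trans V from rfl, mallows1_trans_trans, hh]

lemma swap_lt_swap_iff {p q i j : Fin m} (hpq : (p : ℕ) + 1 = q) (h : ¬(i = p ∧ j = q))
    (h' : ¬(i = q ∧ j = p)) : Equiv.swap p q i < Equiv.swap p q j ↔ i < j := by
  rw [Fin.lt_def, Fin.lt_def]
  simp only [Equiv.swap_apply_def]
  split_ifs <;> simp_all [Fin.ext_iff] <;> omega

lemma KT_swap_trans (V ω : Ranking m) {x y : Fin m} (hadj : (ω x : ℕ) + 1 = ω y)
    (hV : V x < V y) : KT V ((Equiv.swap x y).trans ω) = KT V ω + 1 := by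
  have hω : ω x < ω y := Fin.lt_def.2 (by omega)
  have hne : x ≠ y := by rintro rfl; omega
  rw [KT, KT, ← Finset.card_insert_of_notMem (a := (x, y)) (by simp [hω.le])]
  congr 1
  ext ⟨u, v⟩
  simp only [Finset.mem_filter, Finset.mem_univ, true_and, Finset.mem_insert, Prod.mk.injEq,
    Equiv.trans_apply, ω.injective.map_swap]
  by_cases hxy : u = x ∧ v = y
  · simp [hxy, hV, Equiv.swap_apply_left, Equiv.swap_apply_right, hω]
  by_cases hyx : u = y ∧ v = x
  · simp [hyx, hV.not_gt, hne]
  rw [swap_lt_swap_iff hadj (by rw [ω.injective.eq_iff, ω.injective.eq_iff]; tauto)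
    (by rw [ω.injective.eq_iff, ω.injective.eq_iff]; tauto)]
  tauto

end Mallows

section AdjacentSwaps

variable {m : ℕ}

lemma swap_trans_swap_trans (x y : Fin m) (V : Ranking m) :
    (Equiv.swap x y).trans ((Equiv.swap x y).trans V) = V := by
  ext; simp

lemma mallows1_swap_trans_le {φ : ℝ} (hφ0 : 0 < φ) (hφ1 : φ < 1) (V ω : Ranking m)
    {x y : Fin m} (hadj : (ω x : ℕ) + 1 = ω y) (hV : V x < V y) :
    mallows1 φ ((Equiv.swap x y).trans ω) V ≤ mallows1 φ ω V := by
  unfold mallows1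
  rw [KT_swap_trans V ω hadj hV, sum_pow_KT_eq φ _ ω]
  exact div_le_div_of_nonneg_right (pow_le_pow_of_le_one hφ0.le hφ1.le (Nat.le_succ _))
    (Finset.sum_nonneg fun _ _ => (pow_pos hφ0 _).le)

/-- Pair `V` with `(swap x y).trans V`: on each pair, the swap of `ω` moves the mass
`mallows1 ω V - mallows1 ((swap x y).trans ω) V ≥ 0` to the member on which `h` is larger. -/
lemma sum_mallows1_mul_le_swap_trans {φ : ℝ} (hφ0 : 0 < φ) (hφ1 : φ < 1) (ω : Ranking m)
    {x y : Fin m} (hadj : (ω x : ℕ) + 1 = ω y) (h : Ranking m → ℝ)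
    (hh : ∀ V : Ranking m, V x < V y → h V ≤ h ((Equiv.swap x y).trans V)) :
    ∑ V, mallows1 φ ω V * h V ≤ ∑ V, mallows1 φ ((Equiv.swap x y).trans ω) V * h V := by
  set s := Equiv.swap x y
  set d : Ranking m → ℝ := fun V => mallows1 φ (s.trans ω) V * h V - mallows1 φ ω V * h V
  have hxy : x ≠ y := by rintro rfl; omega
  have hpair_of_lt : ∀ V : Ranking m, V x < V y → 0 ≤ d V + d (s.trans V) := by
    intro V hV
    have h1 : mallows1 φ (s.trans ω) (s.trans V) = mallows1 φ ω V := mallows1_trans_trans φ s ω V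
    have h2 : mallows1 φ ω (s.trans V) = mallows1 φ (s.trans ω) V := by
      rw [← mallows1_trans_trans φ s (s.trans ω) V, swap_trans_swap_trans]
    have : d V + d (s.trans V) =
        (mallows1 φ ω V - mallows1 φ (s.trans ω) V) * (h (s.trans V) - h V) := by
      simp only [d, h1, h2]; ring
    rw [this]
    exact mul_nonneg (sub_nonneg.2 (mallows1_swap_trans_le hφ0 hφ1 V ω hadj hV))
      (sub_nonneg.2 (hh V hV))
  have hpair : ∀ V : Ranking m, 0 ≤ d V + d (s.trans V) := by
    intro V
    rcases lt_or_gt_of_ne (V.injective.ne hxy) with hV | hV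
    · exact hpair_of_lt V hV
    · have := hpair_of_lt (s.trans V) (by simpa [s] using hV)
      rwa [swap_trans_swap_trans, add_comm] at this
  have hsum : ∑ V, d (s.trans V) = ∑ V, d V :=
    Fintype.sum_equiv (Equiv.mulRight s) _ _ fun _ => rfl
  have := Finset.sum_nonneg fun V (_ : V ∈ Finset.univ) => hpair V
  rw [Finset.sum_add_distrib, hsum] at this
  have hd : 0 ≤ ∑ V, d V := by linarith
  simpa [d, Finset.sum_sub_distrib] using hd

lemma exists_adjacent_inversion {ω W : Ranking m} (h : ω ≠ W) :
    ∃ x y, (ω x : ℕ) + 1 = ω y ∧ W y < W x := by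
  by_contra! hno
  apply h
  obtain _ | k := m
  · exact Subsingleton.elim _ _
  have hmono : StrictMono (W ∘ ω.symm) := by
    refine Fin.strictMono_iff_lt_succ.2 fun i => lt_of_le_of_ne ?_ ?_
    · exact hno _ _ (by simp)
    · exact (W.injective.comp ω.symm.injective).ne Fin.castSucc_lt_succ.ne
  have hid : W ∘ ω.symm = id :=
    (hmono.range_inj strictMono_id).1 (by simp [Set.range_comp])
  exact Equiv.ext fun z => by simpa using (congrFun hid (ω z)).symm

/-- Bubble sort towards `W`: each swap of an adjacent inversion lowers `KT W ω` by one. -/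
lemma le_of_adjacent_swap_le (W : Ranking m) (Q : Ranking m → Prop) (g : Ranking m → ℝ)
    (hstep : ∀ ω x y, Q ω → (ω x : ℕ) + 1 = ω y → W y < W x →
      Q ((Equiv.swap x y).trans ω) ∧ g ω ≤ g ((Equiv.swap x y).trans ω))
    (ω : Ranking m) (hω : Q ω) : g ω ≤ g W := by
  induction hN : KT W ω using Nat.strong_induction_on generalizing ω with
  | _ N ih =>
    by_cases hωW : ω = W
    · rw [hωW]
    obtain ⟨x, y, hadj, hinv⟩ := exists_adjacent_inversion hωW
    obtain ⟨hQ, hle⟩ := hstep ω x y hω hadj hinv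
    set ω' := (Equiv.swap x y).trans ω
    have hadj' : (ω' y : ℕ) + 1 = ω' x := by simpa [ω'] using hadj
    have hKT : KT W ω = KT W ω' + 1 := by
      rw [← KT_swap_trans W ω' hadj' hinv, Equiv.swap_comm, swap_trans_swap_trans]
    exact hle.trans (ih _ (by omega) ω' hQ rfl)

end AdjacentSwaps

section Statistic

variable {m : ℕ}

def wset₁ (V : Ranking m) (B : Finset (Fin m)) (a : Fin m) : ℤ :=
  ∑ b ∈ B, if V b < V a then 1 else -1

lemma wset_eq_sum_wset₁ {n : ℕ} (P : Fin n → Ranking m) {B : Finset (Fin m)} {a : Fin m}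
    (ha : a ∉ B) : wset P B a = ∑ i, wset₁ (P i) B a := by
  unfold wset wset₁ wpair
  rw [Finset.sum_comm]
  refine Finset.sum_congr rfl fun b hb => ?_
  rw [Finset.card_filter, Finset.card_filter]
  push_cast
  rw [← Finset.sum_sub_distrib]
  refine Finset.sum_congr rfl fun i _ => ?_
  rcases lt_or_gt_of_ne ((P i).injective.ne (ne_of_mem_of_not_mem hb ha)) with h | h
  · simp [h, h.not_gt]
  · simp [h, h.not_gt]

lemma wset₁_le_wset₁_swap_trans (V : Ranking m) {B : Finset (Fin m)} {a x y : Fin m}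
    (ha : a ∉ B) (hxa : x ≠ a) (hx : x ∉ B) (hy : y ∈ B) (hV : V x < V y) :
    wset₁ V B a ≤ wset₁ ((Equiv.swap x y).trans V) B a := by
  unfold wset₁
  refine Finset.sum_le_sum fun b hb => ?_
  simp only [Equiv.trans_apply,
    Equiv.swap_apply_of_ne_of_ne hxa.symm (ne_of_mem_of_not_mem hy ha).symm]
  by_cases hby : b = y
  · subst hby
    rw [Equiv.swap_apply_right]
    split_ifs with h1 h2 <;> first | exact absurd (hV.trans h1) h2 | norm_num
  · rw [Equiv.swap_apply_of_ne_of_ne (ne_of_mem_of_not_mem hb hx) hby]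

lemma wset₁_swap_trans (V : Ranking m) {B : Finset (Fin m)} {a x y : Fin m} (hxa : x ≠ a)
    (hya : y ≠ a) (hxy : x ∈ B ↔ y ∈ B) :
    wset₁ ((Equiv.swap x y).trans V) B a = wset₁ V B a := by
  unfold wset₁
  refine Finset.sum_equiv (Equiv.swap x y) (fun b => ?_) (fun b _ => ?_)
  · rcases eq_or_ne b x with rfl | hbx
    · simp [hxy]
    rcases eq_or_ne b y with rfl | hby
    · simp [hxy]
    simp [Equiv.swap_apply_of_ne_of_ne hbx hby]
  · simp [Equiv.swap_apply_of_ne_of_ne hxa.symm hya.symm]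

lemma KT_eq_KT_add_wset₁ {a : Fin m} {W W' : Ranking m} (hW' : W' ∈ Ltop a)
    (hlt : ∀ x y, x ≠ a → y ≠ a → (W' x < W' y ↔ W x < W y)) (V : Ranking m) :
    (KT V W' : ℤ) = KT V W + wset₁ V (univ.filter fun b => W b < W a) a := by
  set B := univ.filter fun b => W b < W a
  have hind : ∀ U : Ranking m, (KT V U : ℤ) =
      ∑ p : Fin m × Fin m, if V p.1 < V p.2 ∧ U p.2 < U p.1 then 1 else 0 := by
    intro U
    simp only [KT, Finset.card_filter, Nat.cast_sum, Nat.cast_ite, Nat.cast_one, Nat.cast_zero]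
  have hextra : wset₁ V B a = ∑ p : Fin m × Fin m,
      ((if p.2 = a ∧ p.1 ∈ B ∧ V p.1 < V a then 1 else 0) -
        if p.1 = a ∧ p.2 ∈ B ∧ V a < V p.2 then 1 else 0) := by
    simp only [Fintype.sum_prod_type, ite_and, Finset.sum_sub_distrib, Finset.sum_ite_irrel,
      Finset.sum_const_zero, Finset.sum_ite_eq', Finset.mem_univ, if_true, Finset.sum_ite_mem,
      univ_inter, wset₁]
    rw [← Finset.sum_sub_distrib]
    refine Finset.sum_congr rfl fun b hb => ?_
    have hba : V b ≠ V a := V.injective.ne fun h => by simp [B, h] at hb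
    rcases lt_or_gt_of_ne hba with h | h
    · simp [h, h.not_gt]
    · simp [h, h.not_gt]
  rw [hind, hind, hextra, ← Finset.sum_add_distrib]
  refine Finset.sum_congr rfl fun ⟨u, v⟩ _ => ?_
  have hWa : ∀ c, c ≠ a → (W a < W c ↔ ¬ W c < W a) := fun c hc =>
    ⟨lt_asymm, fun h => lt_of_le_of_ne (not_lt.1 h) (W.injective.ne hc.symm)⟩
  by_cases hu : u = a <;> by_cases hv : v = a
  · simp [hu, hv]
  · subst hu
    simp [B, hv, (hW' v hv).not_gt]
    split_ifs <;> grind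
  · subst hv
    simp [B, hu, hW' u hu, hWa u hu]
    split_ifs <;> grind
  · simp [hu, hv, hlt v u hv hu]

end Statistic

section NullHypothesis

variable {m : ℕ}

lemma swap_trans_mem_Ltop {a x y : Fin m} (hxa : x ≠ a) (hya : y ≠ a) {ω : Ranking m}
    (hω : ω ∈ Ltop a) : (Equiv.swap x y).trans ω ∈ Ltop a := by
  intro b hb
  simp only [Equiv.trans_apply, Equiv.swap_apply_of_ne_of_ne hxa.symm hya.symm]
  refine hω _ fun h => hb ?_
  rwa [Equiv.swap_apply_eq_iff, Equiv.swap_apply_of_ne_of_ne hxa.symm hya.symm] at h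

/-- `W'` is `W` followed by the cycle `(0 1 … W a)` of positions. -/
lemma exists_mem_Ltop_lt_iff (a : Fin m) (W : Ranking m) :
    ∃ W' ∈ Ltop a, ∀ x y, x ≠ a → y ≠ a → (W' x < W' y ↔ W x < W y) := by
  have : NeZero m := ⟨a.pos.ne'⟩
  have hval : ∀ z, z ≠ a →
      (Fin.cycleRange (W a) (W z) : ℕ) = if (W z : ℕ) < W a then (W z : ℕ) + 1 else W z := by
    intro z hz
    rcases lt_or_gt_of_ne (W.injective.ne hz) with h | h
    · rw [if_pos (Fin.lt_def.1 h), Fin.coe_cycleRange_of_lt h]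
    · rw [if_neg (Fin.lt_def.not.1 h.not_gt), Fin.cycleRange_of_gt h]
  refine ⟨W.trans (Fin.cycleRange (W a)), fun b hb => ?_, fun x y hx hy => ?_⟩
  · have hba : (W b : ℕ) ≠ W a := Fin.val_injective.ne (W.injective.ne hb)
    simp only [Equiv.trans_apply, Fin.cycleRange_self, Fin.lt_def, Fin.val_zero, hval b hb]
    split_ifs <;> omega
  · have hxa : (W x : ℕ) ≠ W a := Fin.val_injective.ne (W.injective.ne hx)
    have hya : (W y : ℕ) ≠ W a := Fin.val_injective.ne (W.injective.ne hy)
    simp only [Equiv.trans_apply, Fin.lt_def, hval x hx, hval y hy]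
    split_ifs <;> omega

lemma sum_mallows1_mul_le_of_mem_Ltop {φ : ℝ} (hφ0 : 0 < φ) (hφ1 : φ < 1) {a : Fin m}
    {B : Finset (Fin m)} (ha : a ∉ B) {W : Ranking m} (hW : W ∈ Ltop a)
    (hB : ∀ b ∈ B, ∀ c ∉ B, c ≠ a → W b < W c) {F : ℤ → ℝ} (hF : Monotone F)
    {ω : Ranking m} (hω : ω ∈ Ltop a) :
    ∑ V, mallows1 φ ω V * F (wset₁ V B a) ≤ ∑ V, mallows1 φ W V * F (wset₁ V B a) := by
  refine le_of_adjacent_swap_le W (· ∈ Ltop a) (fun ω => ∑ V, mallows1 φ ω V * F (wset₁ V B a))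
    (fun ω x y hω hadj hinv => ?_) ω hω
  have hxy : x ≠ y := by rintro rfl; omega
  have hxa : x ≠ a := by rintro rfl; exact (hW y hxy.symm).not_gt hinv
  have hya : y ≠ a := by rintro rfl; exact (hω x hxa).not_gt (Fin.lt_def.2 (by omega))
  refine ⟨swap_trans_mem_Ltop hxa hya hω, ?_⟩
  have hinvariant : (x ∈ B ↔ y ∈ B) → ∑ V, mallows1 φ ω V * F (wset₁ V B a) ≤
      ∑ V, mallows1 φ ((Equiv.swap x y).trans ω) V * F (wset₁ V B a) := fun hxyB =>
    (sum_mallows1_trans_mul φ _ ω _ fun V => by rw [wset₁_swap_trans V hxa hya hxyB]).ge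
  by_cases hyB : y ∈ B
  · by_cases hxB : x ∈ B
    · exact hinvariant (iff_of_true hxB hyB)
    · exact sum_mallows1_mul_le_swap_trans hφ0 hφ1 ω hadj _ fun V hV =>
        hF (wset₁_le_wset₁_swap_trans V ha hxa hxB hyB hV)
  · have hxB : x ∉ B := fun hxB => (hB x hxB y hyB hya).not_gt hinv
    exact hinvariant (iff_of_false hxB hyB)

end NullHypothesis

section Samples

variable {X : Type*} [Fintype X]

lemma sum_fin_succ_pi {n : ℕ} (f : (Fin (n + 1) → X) → ℝ) :
    ∑ P, f P = ∑ x, ∑ Q : Fin n → X, f (Fin.cons x Q) := by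
  rw [← (Fin.consEquiv fun _ => X).sum_comp, Fintype.sum_prod_type]
  rfl

/-- `hpq` says that `t` is stochastically larger under `q` than under `p`; this passes to sums
of `n` i.i.d. copies. -/
lemma sum_prod_mul_le_of_forall_monotone (p q : X → ℝ) (hp : ∀ x, 0 ≤ p x) (hq : ∀ x, 0 ≤ q x)
    (t : X → ℤ) (hpq : ∀ F : ℤ → ℝ, Monotone F → ∑ x, p x * F (t x) ≤ ∑ x, q x * F (t x))
    (n : ℕ) {F : ℤ → ℝ} (hF : Monotone F) :
    ∑ P : Fin n → X, (∏ i, p (P i)) * F (∑ i, t (P i)) ≤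
      ∑ P : Fin n → X, (∏ i, q (P i)) * F (∑ i, t (P i)) := by
  induction n generalizing F with
  | zero => simp
  | succ n ih =>
    simp only [sum_fin_succ_pi, Fin.prod_univ_succ, Fin.sum_univ_succ, Fin.cons_zero,
      Fin.cons_succ]
    calc ∑ x, ∑ Q : Fin n → X, p x * (∏ i, p (Q i)) * F (t x + ∑ i, t (Q i))
        = ∑ x, p x * ∑ Q : Fin n → X, (∏ i, p (Q i)) * F (t x + ∑ i, t (Q i)) := by
          simp only [Finset.mul_sum, mul_assoc]
      _ ≤ ∑ x, p x * ∑ Q : Fin n → X, (∏ i, q (Q i)) * F (t x + ∑ i, t (Q i)) :=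
          Finset.sum_le_sum fun x _ =>
            mul_le_mul_of_nonneg_left (ih fun _ _ h => hF (by omega)) (hp x)
      _ = ∑ Q : Fin n → X, (∏ i, q (Q i)) * ∑ x, p x * F (t x + ∑ i, t (Q i)) := by
          simp only [Finset.mul_sum]
          rw [Finset.sum_comm]
          exact Finset.sum_congr rfl fun _ _ => Finset.sum_congr rfl fun _ _ => by ring
      _ ≤ ∑ Q : Fin n → X, (∏ i, q (Q i)) * ∑ x, q x * F (t x + ∑ i, t (Q i)) :=
          Finset.sum_le_sum fun Q _ => mul_le_mul_of_nonneg_left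
            (hpq (fun s => F (s + ∑ i, t (Q i))) fun _ _ h => hF (by omega))
            (Finset.prod_nonneg fun i _ => hq (Q i))
      _ = ∑ x, ∑ Q : Fin n → X, q x * (∏ i, q (Q i)) * F (t x + ∑ i, t (Q i)) := by
          simp only [Finset.mul_sum]
          rw [Finset.sum_comm]
          exact Finset.sum_congr rfl fun _ _ => Finset.sum_congr rfl fun _ _ => by ring

end Samples

section Profiles

variable {m n : ℕ}

lemma wTest_intCast (B : Finset (Fin m)) (a : Fin m) (K : ℤ) (Γ : ℝ) :
    wTest n B a K Γ = fun P => threshold K Γ (wset P B a) := by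
  funext P
  simp only [wTest, threshold, Int.cast_lt]

lemma mallows_nonneg {φ : ℝ} (hφ : 0 < φ) (W : Ranking m) (P : Fin n → Ranking m) :
    0 ≤ mallows φ n W P :=
  Finset.prod_nonneg fun i _ => mallows1_nonneg hφ W (P i)

lemma sum_mallows {φ : ℝ} (hφ : 0 < φ) (W : Ranking m) :
    ∑ P : Fin n → Ranking m, mallows φ n W P = 1 := by
  simp only [mallows, ← Fintype.prod_sum, sum_mallows1 hφ W, Finset.prod_const_one]

lemma sum_mallows_mul_le_of_mem_Ltop {φ : ℝ} (hφ0 : 0 < φ) (hφ1 : φ < 1) {a : Fin m}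
    {B : Finset (Fin m)} (ha : a ∉ B) {W : Ranking m} (hW : W ∈ Ltop a)
    (hB : ∀ b ∈ B, ∀ c ∉ B, c ≠ a → W b < W c) {F : ℤ → ℝ} (hF : Monotone F)
    {ω : Ranking m} (hω : ω ∈ Ltop a) :
    ∑ P : Fin n → Ranking m, mallows φ n ω P * F (wset P B a) ≤
      ∑ P : Fin n → Ranking m, mallows φ n W P * F (wset P B a) := by
  simp only [mallows, wset_eq_sum_wset₁ _ ha]
  exact sum_prod_mul_le_of_forall_monotone _ _ (mallows1_nonneg hφ0 ω) (mallows1_nonneg hφ0 W) _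
    (fun _ hF' => sum_mallows1_mul_le_of_mem_Ltop hφ0 hφ1 ha hW hB hF' hω) n hF

lemma mallows_eq_mallows_mul_zpow {φ : ℝ} (hφ : 0 < φ) {a : Fin m} {W W' : Ranking m}
    (hW' : W' ∈ Ltop a) (hlt : ∀ x y, x ≠ a → y ≠ a → (W' x < W' y ↔ W x < W y))
    (P : Fin n → Ranking m) :
    mallows φ n W P = mallows φ n W' P * φ ^ (-wset P (univ.filter fun b => W b < W a) a) := by
  have hclosed : ∀ U : Ranking m, mallows φ n U P =
      φ ^ (∑ i, KT (P i) U) / (∑ V : Ranking m, φ ^ KT V W) ^ n := by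
    intro U
    simp only [mallows, mallows1, sum_pow_KT_eq φ U W, Finset.prod_div_distrib,
      Finset.prod_pow_eq_pow_sum, Finset.prod_const, Finset.card_univ, Fintype.card_fin]
  have hKT : ((∑ i, KT (P i) W' : ℕ) : ℤ) =
      (∑ i, KT (P i) W : ℕ) + wset P (univ.filter fun b => W b < W a) a := by
    rw [wset_eq_sum_wset₁ P (by simp), Nat.cast_sum, Nat.cast_sum, ← Finset.sum_add_distrib]
    exact Finset.sum_congr rfl fun i _ => KT_eq_KT_add_wset₁ hW' hlt (P i)
  rw [hclosed W, hclosed W', div_mul_eq_mul_div, ← zpow_natCast,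
    ← zpow_natCast φ (∑ i, KT (P i) W'), hKT, ← zpow_add₀ hφ.ne', add_neg_cancel_right]

end Profiles

theorem stmt0_general (m n : ℕ) (φ : ℝ) (hφ0 : 0 < φ) (hφ1 : φ < 1)
    (α : ℝ) (hα0 : 0 < α) (hα1 : α < 1)
    (a : Fin m) (h₁ : Ranking m) :
    ∃ K Γ : ℝ, 0 ≤ Γ ∧ Γ ≤ 1 ∧
      SizeEq (mallows φ n) (Ltop a)
        (wTest n (Finset.univ.filter (fun b => h₁ b < h₁ a)) a K Γ) α ∧
      IsMostPowerful (mallows φ n) (Ltop a) h₁ α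
        (wTest n (Finset.univ.filter (fun b => h₁ b < h₁ a)) a K Γ) := by
  set B := Finset.univ.filter (fun b => h₁ b < h₁ a)
  obtain ⟨W, hW, hlt⟩ := exists_mem_Ltop_lt_iff a h₁
  have haB : a ∉ B := by simp [B]
  have hB : ∀ b ∈ B, ∀ c ∉ B, c ≠ a → W b < W c := by
    intro b hb c hc hca
    have hac : h₁ a < h₁ c :=
      lt_of_le_of_ne (not_lt.1 fun h => hc (by simp [B, h])) (h₁.injective.ne hca.symm)
    exact (hlt b c (ne_of_mem_of_not_mem hb haB) hca).2 ((Finset.mem_filter.1 hb).2.trans hac)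
  obtain ⟨K, Γ, hΓ0, hΓ1, hsize⟩ := exists_threshold_sum_eq (mallows φ n W) (sum_mallows hφ0 W)
    (fun P => wset P B a) hα0.le hα1
  have hf := wTest_intCast (n := n) B a K Γ
  have hSizeLe : SizeLe (mallows φ n) (Ltop a) (wTest n B a K Γ) α := fun ω hω => by
    rw [← hsize, Size, hf]
    exact sum_mallows_mul_le_of_mem_Ltop hφ0 hφ1 haB hW hB (monotone_threshold hΓ0 hΓ1) hω
  refine ⟨K, Γ, hΓ0, hΓ1, ⟨hSizeLe, W, hW, by rw [Size, hf, hsize]⟩,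
    hf ▸ fun P => threshold_mem_Icc hΓ0 hΓ1 _, hSizeLe, fun g hg hgsize => ?_⟩
  rw [Power, Power, hf]
  refine sum_mul_le_sum_mul_threshold _ _ (mallows_nonneg hφ0 W) _
    (fun _ _ h => zpow_le_zpow_right_of_le_one₀ hφ0 hφ1.le (neg_le_neg h)) (zpow_pos hφ0 _).le
    (mallows_eq_mallows_mul_zpow hφ0 hW hlt) Γ g hg ?_
  rw [hsize]
  exact hgsize W hW

/-- Under Mallows' model with `n` i.i.d. samples, for any alternative `a`,
any ranking `h₁` in which `a` is not ranked at the top, and any `0<α<1`, with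
`B = {b : b ≻_{h₁} a}`, there exist `K` and `Γ ∈ [0,1]` such that the threshold test on
`w_P(B≻a)` has size exactly `α` over `H₀ = L_{a≻others}` and is a level-`α` most powerful
test for `H₀` vs `h₁`. -/
theorem stmt0 (m n : ℕ) (φ : ℝ) (hφ0 : 0 < φ) (hφ1 : φ < 1)
    (α : ℝ) (hα0 : 0 < α) (hα1 : α < 1)
    (a : Fin m) (h₁ : Ranking m) (hh₁ : h₁ ∉ Ltop a) :
    ∃ K Γ : ℝ, 0 ≤ Γ ∧ Γ ≤ 1 ∧
      SizeEq (mallows φ n) (Ltop a)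
        (wTest n (Finset.univ.filter (fun b => h₁ b < h₁ a)) a K Γ) α ∧
      IsMostPowerful (mallows φ n) (Ltop a) h₁ α
        (wTest n (Finset.univ.filter (fun b => h₁ b < h₁ a)) a K Γ) :=
  stmt0_general m n φ hφ0 hφ1 α hα0 hα1 a h₁

end Voting
end

section
/- Let ℳ_X = (𝒮_X,Θ_X,(π_{θ_X})) and ℳ_Y = (𝒮_Y,Θ_Y,(π_{θ_Y})) be finite statistical models with all probabilities strictly positive, let H_{0,X} ⊆ Θ_X, x₁ ∈ Θ_X∖H_{0,X}, y₁ ∈ Θ_Y, and let Λ_X be a probability distribution on H_{0,X}. Define Λ* on H_{0,X}×Θ_Y by Λ*(x,y₁) = Λ_X(x) for every x ∈ H_{0,X} (and Λ* = 0 elsewhere). Then, for every 0<α<1, if Λ_X is a level-α least favorable distribution for H_{0,X} vs x₁ under ℳ_X, then Λ* is a level-α least favorable distribution for H_{0,X}×Θ_Y vs (x₁,y₁) under the combined model ℳ_X⊗ℳ_Y. -/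
namespace Voting

open Finset

section LFD

variable {S Θ : Type*} [Fintype S] [Fintype Θ]

/-- Likelihood ratio of `P` for the mixture `Λ` over `H0` vs `h1`. -/
noncomputable def Ratio (π : Θ → S → ℝ) (Λ : Θ → ℝ) (h1 : Θ) (P : S) : ℝ :=
  π h1 P / ∑ θ, Λ θ * π θ P

/-- `Λ` is a probability distribution supported on `H0`. -/
def IsDistOn {Θ : Type*} [Fintype Θ] (Λ : Θ → ℝ) (H0 : Set Θ) : Prop :=
  (∀ θ, 0 ≤ Λ θ) ∧ (∀ θ, θ ∉ H0 → Λ θ = 0) ∧ (∑ θ, Λ θ) = 1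

/-- The likelihood ratio test with threshold `k` and randomization `γ`. -/
noncomputable def lrTest (π : Θ → S → ℝ) (Λ : Θ → ℝ) (h1 : Θ) (k γ : ℝ) : S → ℝ :=
  fun P =>
    if k < Ratio π Λ h1 P then 1
    else if Ratio π Λ h1 P < k then 0
    else γ

/-- `Λ` is a level-`α` least favorable distribution for `H0` vs `h1`:
some level-`α` likelihood ratio test for `Λ` vs `h1` is level-`α` most powerful. -/
def IsLFD (π : Θ → S → ℝ) (H0 : Set Θ) (h1 : Θ) (Λ : Θ → ℝ) (α : ℝ) : Prop :=
  ∃ k γ : ℝ, 0 ≤ k ∧ 0 ≤ γ ∧ γ ≤ 1 ∧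
    SizeEq π H0 (lrTest π Λ h1 k γ) α ∧
    IsMostPowerful π H0 h1 α (lrTest π Λ h1 k γ)

/-- `Λ` is a uniformly least favorable distribution for `H0` vs `h1`. -/
def IsULFD (π : Θ → S → ℝ) (H0 : Set Θ) (h1 : Θ) (Λ : Θ → ℝ) : Prop :=
  ∀ α : ℝ, 0 < α → α < 1 → IsLFD π H0 h1 Λ α

end LFD


/-- The combined model `ℳ_X ⊗ ℳ_Y`. -/
noncomputable def combModel {SX ΘX SY ΘY : Type*}
    (πX : ΘX → SX → ℝ) (πY : ΘY → SY → ℝ) : ΘX × ΘY → SX × SY → ℝ :=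
  fun θ P => πX θ.1 P.1 * πY θ.2 P.2

/-- **Lemma on combining two models.** If `Λ_X` is a level-`α` least
favorable distribution for `H_{0,X}` vs `x₁` under `ℳ_X`, then `Λ*` (copying `Λ_X` onto
the slice `H_{0,X} × {y₁}`) is a level-`α` least favorable distribution for
`H_{0,X} × Θ_Y` vs `(x₁,y₁)` under `ℳ_X ⊗ ℳ_Y`. -/
theorem stmt8 {SX ΘX SY ΘY : Type*}
    [Fintype SX] [Fintype ΘX] [Fintype SY] [Fintype ΘY] [DecidableEq ΘY]
    (πX : ΘX → SX → ℝ) (πY : ΘY → SY → ℝ)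
    (hπX : ∀ θ P, 0 < πX θ P) (hprobX : ∀ θ, ∑ P, πX θ P = 1)
    (hπY : ∀ θ P, 0 < πY θ P) (hprobY : ∀ θ, ∑ P, πY θ P = 1)
    (H₀X : Set ΘX) (x₁ : ΘX) (hx₁ : x₁ ∉ H₀X) (y₁ : ΘY)
    (ΛX : ΘX → ℝ) (hΛ : IsDistOn ΛX H₀X)
    (α : ℝ) (hα0 : 0 < α) (hα1 : α < 1)
    (hLFD : IsLFD πX H₀X x₁ ΛX α) :
    IsLFD (combModel πX πY) (H₀X ×ˢ (Set.univ : Set ΘY)) (x₁, y₁)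
      (fun θ => if θ.2 = y₁ then ΛX θ.1 else 0) α := by
  obtain ⟨k, γ, hk, hγ0, hγ1, ⟨hsizele, h0, hh0, hsize⟩, hftest, hfsize, hfmp⟩ := hLFD
  have hratio : ∀ P : SX × SY,
      Ratio (combModel πX πY) (fun θ : ΘX × ΘY => if θ.2 = y₁ then ΛX θ.1 else 0)
        (x₁, y₁) P = Ratio πX ΛX x₁ P.1 := by
    rintro ⟨P, Q⟩
    simp only [Ratio, combModel]
    rw [Fintype.sum_prod_type]
    have hinner : ∀ x : ΘX, (∑ y : ΘY, (if y = y₁ then ΛX x else 0) * (πX x P * πY y Q))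
        = ΛX x * πX x P * πY y₁ Q := by
      intro x
      rw [Finset.sum_eq_single y₁]
      · simp [mul_assoc]
      · intro b _ hb; simp [hb]
      · simp
    simp only [hinner]
    rw [← Finset.sum_mul, mul_div_mul_right _ _ (ne_of_gt (hπY y₁ Q))]
  have hlr : ∀ P : SX × SY,
      lrTest (combModel πX πY) (fun θ : ΘX × ΘY => if θ.2 = y₁ then ΛX θ.1 else 0)
        (x₁, y₁) k γ P = lrTest πX ΛX x₁ k γ P.1 := by
    intro P; simp only [lrTest, hratio]
  have hsizeprod : ∀ (g : SX → ℝ) (x : ΘX) (y : ΘY),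
      Size (combModel πX πY) (fun P => g P.1) (x, y) = Size πX g x := by
    intro g x y
    simp only [Size, combModel]
    rw [Fintype.sum_prod_type]
    refine Finset.sum_congr rfl fun P _ => ?_
    have : (∑ Q : SY, πX x P * πY y Q * g P) = (∑ Q : SY, πY y Q) * (πX x P * g P) := by
      rw [Finset.sum_mul]
      exact Finset.sum_congr rfl fun Q _ => by ring
    rw [this, hprobY, one_mul]
  refine ⟨k, γ, hk, hγ0, hγ1, ?_, ?_⟩
  · constructor
    · rintro ⟨x, y⟩ ⟨hx, -⟩
      have : Size (combModel πX πY)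
          (lrTest (combModel πX πY) (fun θ : ΘX × ΘY => if θ.2 = y₁ then ΛX θ.1 else 0)
            (x₁, y₁) k γ) (x, y)
          = Size πX (lrTest πX ΛX x₁ k γ) x := by
        rw [show (lrTest (combModel πX πY)
            (fun θ : ΘX × ΘY => if θ.2 = y₁ then ΛX θ.1 else 0) (x₁, y₁) k γ)
            = fun P : SX × SY => lrTest πX ΛX x₁ k γ P.1 from funext hlr]
        exact hsizeprod _ x y
      rw [this]
      exact hsizele x hx
    · refine ⟨(h0, y₁), ⟨hh0, Set.mem_univ _⟩, ?_⟩
      rw [show (lrTest (combModel πX πY)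
          (fun θ : ΘX × ΘY => if θ.2 = y₁ then ΛX θ.1 else 0) (x₁, y₁) k γ)
          = fun P : SX × SY => lrTest πX ΛX x₁ k γ P.1 from funext hlr]
      rw [hsizeprod _ h0 y₁]
      exact hsize
  · refine ⟨?_, ?_, ?_⟩
    · intro P; rw [hlr]; exact hftest P.1
    · rintro ⟨x, y⟩ ⟨hx, -⟩
      rw [show (lrTest (combModel πX πY)
          (fun θ : ΘX × ΘY => if θ.2 = y₁ then ΛX θ.1 else 0) (x₁, y₁) k γ)
          = fun P : SX × SY => lrTest πX ΛX x₁ k γ P.1 from funext hlr]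
      rw [hsizeprod _ x y]
      exact hfsize x hx
    · intro g hgtest hgsize
      set gX : SX → ℝ := fun P => ∑ Q, πY y₁ Q * g (P, Q) with hgX
      have hgXtest : IsTest gX := by
        intro P
        constructor
        · exact Finset.sum_nonneg fun Q _ =>
            mul_nonneg (hπY y₁ Q).le (hgtest (P, Q)).1
        · calc (∑ Q, πY y₁ Q * g (P, Q)) ≤ ∑ Q, πY y₁ Q * 1 :=
                Finset.sum_le_sum fun Q _ =>
                  mul_le_mul_of_nonneg_left (hgtest (P, Q)).2 (hπY y₁ Q).le
            _ = 1 := by simp [hprobY]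
      have hsizegX : ∀ x : ΘX, Size πX gX x = Size (combModel πX πY) g (x, y₁) := by
        intro x
        simp only [Size, combModel, hgX]
        rw [Fintype.sum_prod_type]
        refine Finset.sum_congr rfl fun P _ => ?_
        rw [Finset.mul_sum]
        exact Finset.sum_congr rfl fun Q _ => by ring
      have hgXsize : SizeLe πX H₀X gX α := by
        intro x hx
        rw [hsizegX x]
        exact hgsize (x, y₁) ⟨hx, Set.mem_univ _⟩
      have hpow : Power (combModel πX πY) g (x₁, y₁) = Power πX gX x₁ := by
        simp only [Power, combModel, hgX]
        rw [Fintype.sum_prod_type]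
        refine Finset.sum_congr rfl fun P _ => ?_
        rw [Finset.mul_sum]
        exact Finset.sum_congr rfl fun Q _ => by ring
      have hpowf : Power (combModel πX πY)
          (lrTest (combModel πX πY) (fun θ : ΘX × ΘY => if θ.2 = y₁ then ΛX θ.1 else 0)
            (x₁, y₁) k γ) (x₁, y₁) = Power πX (lrTest πX ΛX x₁ k γ) x₁ := by
        rw [show (lrTest (combModel πX πY)
            (fun θ : ΘX × ΘY => if θ.2 = y₁ then ΛX θ.1 else 0) (x₁, y₁) k γ)
            = fun P : SX × SY => lrTest πX ΛX x₁ k γ P.1 from funext hlr]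
        exact hsizeprod _ x₁ y₁
      rw [hpow, hpowf]
      exact hfmp gX hgXtest hgXsize


end Voting
end

section
/- Under Condorcet's model with m ≥ 2 alternatives and n i.i.d. samples, for any alternative a, any h₁ ∈ ℬ(𝒜)∖R_{a≻others}, and any 0<α<1, let B = {b ∈ 𝒜 : b ≻_{h₁} a} be the set of alternatives preferred to a in h₁. Then there exist K ∈ ℝ and Γ ∈ [0,1] such that the test g defined on profiles P ∈ ℬ(𝒜)^n by g(P)=1 if w_P(B≻a)>K, g(P)=0 if w_P(B≻a)<K, and g(P)=Γ if w_P(B≻a)=K, has Size(g)=α over H₀ = R_{a≻others}, and g is a level-α most powerful test for H₀ = R_{a≻others} vs the simple alternative h₁. -/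
namespace Voting

open Finset

/-- An irreflexive, antisymmetric, total binary relation on `Fin m`. -/
abbrev IsTournament {m : ℕ} (R : Fin m → Fin m → Bool) : Prop :=
  ∀ a b : Fin m, (a = b → R a b = false) ∧ (a ≠ b → R a b = !R b a)

/-- `ℬ(𝒜)` : the set of irreflexive, antisymmetric, total binary relations on `Fin m`;
`R.1 a b = true` means `a ≻_R b`. -/
abbrev Tournament (m : ℕ) := {R : Fin m → Fin m → Bool // IsTournament R}

/-- Kendall-tau distance on binary relations. -/
def KTt {m : ℕ} (V W : Tournament m) : ℕ :=
  (Finset.univ.filter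
    (fun p : Fin m × Fin m => V.1 p.1 p.2 = true ∧ W.1 p.2 p.1 = true)).card

/-- Condorcet single-sample probability of `V` given ground truth `W` and dispersion `φ`. -/
noncomputable def condorcet1 {m : ℕ} (φ : ℝ) (W V : Tournament m) : ℝ :=
  φ ^ KTt V W / ∑ U : Tournament m, φ ^ KTt U W

/-- Condorcet's model with `n` i.i.d. samples. -/
noncomputable def condorcet {m : ℕ} (φ : ℝ) (n : ℕ) :
    Tournament m → (Fin n → Tournament m) → ℝ :=
  fun W P => ∏ i, condorcet1 φ W (P i)

/-- `R_{a≻others}` : binary relations in which `a` is preferred to all other alternatives. -/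
def Rtop {m : ℕ} (a : Fin m) : Set (Tournament m) :=
  {V | ∀ b, b ≠ a → V.1 a b = true}

/-- `w_P(b≻a)` for a profile of binary relations. -/
def wpairT {m n : ℕ} (P : Fin n → Tournament m) (b a : Fin m) : ℤ :=
  ((Finset.univ.filter (fun i => (P i).1 b a = true)).card : ℤ) -
    ((Finset.univ.filter (fun i => (P i).1 a b = true)).card : ℤ)

/-- `w_P(B≻a) = Σ_{b∈B} w_P(b≻a)`. -/
def wsetT {m n : ℕ} (P : Fin n → Tournament m) (B : Finset (Fin m)) (a : Fin m) : ℤ :=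
  ∑ b ∈ B, wpairT P b a

/-- The threshold test on the statistic `w_P(B≻a)` for Condorcet's model. -/
noncomputable def wTestT {m : ℕ} (n : ℕ) (B : Finset (Fin m)) (a : Fin m) (K Γ : ℝ) :
    (Fin n → Tournament m) → ℝ :=
  fun P =>
    if K < ((wsetT P B a : ℤ) : ℝ) then 1
    else if ((wsetT P B a : ℤ) : ℝ) < K then 0
    else Γ

/-!
Let `h*` be `h₁` with `a` raised to the top. Comparing Kendall-tau distances pair by pair,
`π_{h₁}(P) = φ^{-w_P(B≻a)} π_{h*}(P)`, so the likelihood ratio of `h₁` against `h*` is increasing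
in `w_P(B≻a)` and, by Neyman–Pearson, the randomized threshold test on `w_P(B≻a)` is most powerful
for `h*` against `h₁`. For `W, W' ∈ R_{a≻others}`, reversing every sample on the pairs where `W`
and `W'` disagree carries `π_W` to `π_{W'}` and leaves `w_P(B≻a)` unchanged, since none of these
pairs involves `a`. So the test has the same size at every null hypothesis, and a test of level `α`
over `R_{a≻others}` has size at most `α` at `h*`.
-/

noncomputable def thresholdTest {S : Type*} (T : S → ℝ) (K Γ : ℝ) (P : S) : ℝ :=
  if K < T P then 1 else if T P < K then 0 else Γ

lemma isTest_thresholdTest {S : Type*} (T : S → ℝ) {K Γ : ℝ} (hΓ0 : 0 ≤ Γ) (hΓ1 : Γ ≤ 1) :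
    IsTest (thresholdTest T K Γ) := by
  intro P
  unfold thresholdTest
  split_ifs <;> constructor <;> linarith

section Threshold

variable {S : Type*} [Fintype S] (T : S → ℝ)

lemma sum_mul_thresholdTest (μ : S → ℝ) (K Γ : ℝ) :
    ∑ P, μ P * thresholdTest T K Γ P =
      ∑ P ∈ univ.filter (K < T ·), μ P + Γ * ∑ P ∈ univ.filter (T · = K), μ P := by
  rw [sum_filter, sum_filter, mul_sum, ← sum_add_distrib]
  refine sum_congr rfl fun P _ => ?_
  unfold thresholdTest
  rcases lt_trichotomy (T P) K with h | h | h
  · simp [h, h.ne, h.not_gt]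
  · simp [h, mul_comm]
  · simp [h, h.ne']

lemma sum_filter_le_eq_add (μ : S → ℝ) (K : ℝ) :
    ∑ P ∈ univ.filter (K ≤ T ·), μ P =
      ∑ P ∈ univ.filter (K < T ·), μ P + ∑ P ∈ univ.filter (T · = K), μ P := by
  simp only [sum_filter, ← sum_add_distrib]
  refine sum_congr rfl fun P _ => ?_
  rcases lt_trichotomy (T P) K with h | h | h
  · simp [h.not_ge, h.ne, h.not_gt]
  · simp [h]
  · simp [h.le, h, h.ne']

-- `K` is the largest value of `T` whose weak upper tail still has mass at least `α`.
lemma exists_tail_le_le {μ : S → ℝ} (hμ1 : ∑ P, μ P = 1)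
    {α : ℝ} (hα0 : 0 ≤ α) (hα1 : α ≤ 1) :
    ∃ K, ∑ P ∈ univ.filter (K < T ·), μ P ≤ α ∧ α ≤ ∑ P ∈ univ.filter (K ≤ T ·), μ P := by
  set tail : ℝ → ℝ := fun K => ∑ P ∈ univ.filter (K ≤ T ·), μ P
  have hS : (univ : Finset S).Nonempty := by
    by_contra h
    simp [not_nonempty_iff_eq_empty.1 h] at hμ1
  obtain ⟨P₀, -, hP₀⟩ := exists_min_image univ T hS
  have hC : (univ.filter fun P => α ≤ tail (T P)).Nonempty := by
    refine ⟨P₀, mem_filter.2 ⟨mem_univ _, ?_⟩⟩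
    simpa [tail, filter_true_of_mem fun P _ => hP₀ P (mem_univ P), hμ1] using hα1
  obtain ⟨P₁, hP₁, hmax⟩ := exists_max_image _ T hC
  refine ⟨T P₁, ?_, (mem_filter.1 hP₁).2⟩
  by_contra! hlt
  have hU : (univ.filter (T P₁ < T ·)).Nonempty := by
    by_contra h
    rw [not_nonempty_iff_eq_empty.1 h, sum_empty] at hlt
    linarith
  obtain ⟨Q, hQ, hQmin⟩ := exists_min_image _ T hU
  have hQ₁ : T P₁ < T Q := (mem_filter.1 hQ).2
  have htail : tail (T Q) = ∑ P ∈ univ.filter (T P₁ < T ·), μ P := by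
    refine sum_congr (ext fun P => ?_) fun _ _ => rfl
    simp only [mem_filter, mem_univ, true_and]
    exact ⟨hQ₁.trans_le, fun h => hQmin P (mem_filter.2 ⟨mem_univ _, h⟩)⟩
  have := hmax Q (mem_filter.2 ⟨mem_univ _, htail ▸ hlt.le⟩)
  linarith

lemma exists_thresholdTest_sum_mul_eq {μ : S → ℝ} (hμ1 : ∑ P, μ P = 1)
    {α : ℝ} (hα0 : 0 ≤ α) (hα1 : α ≤ 1) :
    ∃ K Γ, 0 ≤ Γ ∧ Γ ≤ 1 ∧ ∑ P, μ P * thresholdTest T K Γ P = α := by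
  obtain ⟨K, hstrict, hweak⟩ := exists_tail_le_le T hμ1 hα0 hα1
  rw [sum_filter_le_eq_add] at hweak
  set s := ∑ P ∈ univ.filter (K < T ·), μ P
  set e := ∑ P ∈ univ.filter (T · = K), μ P
  refine ⟨K, (α - s) / e, ?_⟩
  rw [sum_mul_thresholdTest]
  rcases (show 0 ≤ e by linarith).eq_or_lt with he | he
  · refine ⟨by simp [← he], by simp [← he], by simp [← he] at hweak ⊢; linarith⟩
  · refine ⟨div_nonneg (by linarith) he.le, (div_le_one he).2 (by linarith), ?_⟩
    field_simp
    ring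

end Threshold

section NeymanPearson

variable {S Θ : Type*} [Fintype S] {π : Θ → S → ℝ} {θ₀ θ₁ : Θ} {f g : S → ℝ}

/-- Neyman–Pearson: summing the pointwise inequality gives
`Power f - Power g ≥ k * (Size f - Size g) ≥ 0`. -/
lemma power_le_power_of_sub_mul_nonneg {k : ℝ} (hk : 0 ≤ k)
    (hfg : ∀ P, 0 ≤ (f P - g P) * (π θ₁ P - k * π θ₀ P))
    (hsize : Size π g θ₀ ≤ Size π f θ₀) : Power π g θ₁ ≤ Power π f θ₁ := by
  have hsum : 0 ≤ ∑ P, (f P - g P) * (π θ₁ P - k * π θ₀ P) := sum_nonneg fun P _ => hfg P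
  have hexpand : ∑ P, (f P - g P) * (π θ₁ P - k * π θ₀ P) =
      (Power π f θ₁ - Power π g θ₁) - k * (Size π f θ₀ - Size π g θ₀) := by
    simp only [Power, Size, mul_sub, mul_sum, ← sum_sub_distrib]
    exact sum_congr rfl fun P _ => by ring
  have := mul_nonneg hk (sub_nonneg.2 hsize)
  linarith

lemma power_le_power_thresholdTest {T : S → ℝ} {r : ℝ → ℝ} (hr : Monotone r) {K Γ : ℝ}
    (hrK : 0 ≤ r K) (hπ₀ : ∀ P, 0 ≤ π θ₀ P) (hratio : ∀ P, π θ₁ P = r (T P) * π θ₀ P)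
    (hg : IsTest g) (hsize : Size π g θ₀ ≤ Size π (thresholdTest T K Γ) θ₀) :
    Power π g θ₁ ≤ Power π (thresholdTest T K Γ) θ₁ := by
  refine power_le_power_of_sub_mul_nonneg hrK (fun P => ?_) hsize
  rw [hratio, ← sub_mul, ← mul_assoc]
  refine mul_nonneg ?_ (hπ₀ P)
  unfold thresholdTest
  rcases lt_trichotomy (T P) K with h | h | h
  · rw [if_neg h.not_gt, if_pos h]
    exact mul_nonneg_of_nonpos_of_nonpos (by linarith [(hg P).1]) (by linarith [hr h.le])
  · simp [h]
  · rw [if_pos h]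
    exact mul_nonneg (by linarith [(hg P).2]) (by linarith [hr h.le])

end NeymanPearson

namespace Tournament

variable {m : ℕ}

lemma irrefl (V : Tournament m) (x : Fin m) : V.1 x x = false := (V.2 x x).1 rfl

lemma apply_swap (V : Tournament m) {x y : Fin m} (h : x ≠ y) : V.1 y x = !V.1 x y := by
  rw [(V.2 x y).2 h, Bool.not_not]

/-- `KTt` counts each disagreement once, as the ordered pair oriented by `V`. -/
lemma two_mul_KTt (V W : Tournament m) :
    2 * KTt V W = #(univ.filter fun p : Fin m × Fin m => V.1 p.1 p.2 ≠ W.1 p.1 p.2) := by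
  have hswap : KTt V W = #(univ.filter fun p : Fin m × Fin m => V.1 p.2 p.1 ∧ W.1 p.1 p.2) :=
    card_equiv (Equiv.prodComm _ _) (by simp)
  rw [two_mul]
  nth_rw 2 [hswap]
  rw [KTt, ← card_union_of_disjoint]
  · congr 1
    ext ⟨x, y⟩
    simp only [mem_union, mem_filter, mem_univ, true_and]
    rcases eq_or_ne x y with rfl | h
    · simp [irrefl]
    · rw [apply_swap V h, apply_swap W h]
      cases V.1 x y <;> cases W.1 x y <;> decide
  · refine disjoint_filter.2 fun ⟨x, y⟩ _ h h' => ?_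
    rcases eq_or_ne x y with rfl | hxy
    · simp [irrefl] at h
    · simp [apply_swap V hxy, h.1] at h'

/-- Reverse `V` on exactly the pairs where `W` and `W'` disagree. -/
def flip (W W' V : Tournament m) : Tournament m :=
  ⟨fun x y => xor (V.1 x y) (xor (W.1 x y) (W'.1 x y)), fun x y => by
    refine ⟨by rintro rfl; simp [irrefl], fun h => ?_⟩
    dsimp only
    rw [apply_swap V h.symm, apply_swap W h.symm, apply_swap W' h.symm]
    cases V.1 y x <;> cases W.1 y x <;> cases W'.1 y x <;> decide⟩

lemma flip_apply (W W' V : Tournament m) (x y : Fin m) :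
    (flip W W' V).1 x y = xor (V.1 x y) (xor (W.1 x y) (W'.1 x y)) := rfl

lemma flip_involutive (W W' : Tournament m) : Function.Involutive (flip W W') := fun V => by
  refine Subtype.ext (funext₂ fun x y => ?_)
  rw [flip_apply, flip_apply]
  cases V.1 x y <;> cases W.1 x y <;> cases W'.1 x y <;> decide

lemma KTt_flip (W W' V : Tournament m) : KTt (flip W W' V) W' = KTt V W := by
  have h : 2 * KTt (flip W W' V) W' = 2 * KTt V W := by
    simp only [two_mul_KTt]
    congr 1
    ext ⟨x, y⟩
    simp only [mem_filter, mem_univ, true_and]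
    rw [flip_apply]
    cases V.1 x y <;> cases W.1 x y <;> cases W'.1 x y <;> decide
  omega

lemma sum_pow_KTt_eq (φ : ℝ) (W W' : Tournament m) :
    ∑ U, φ ^ KTt U W = ∑ U, φ ^ KTt U W' :=
  Fintype.sum_equiv (flip_involutive W W').toPerm _ _ fun U => by
    simp [KTt_flip]

lemma condorcet_flip (φ : ℝ) {n : ℕ} (W W' : Tournament m) (P : Fin n → Tournament m) :
    condorcet φ n W' (fun i => flip W W' (P i)) = condorcet φ n W P := by
  simp only [condorcet, condorcet1, KTt_flip, sum_pow_KTt_eq φ W W']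

lemma apply_left_eq_of_mem_Rtop {a : Fin m} {W W' : Tournament m} (hW : W ∈ Rtop a)
    (hW' : W' ∈ Rtop a) (b : Fin m) : W.1 a b = W'.1 a b := by
  rcases eq_or_ne b a with rfl | hb
  · rw [irrefl, irrefl]
  · rw [hW b hb, hW' b hb]

lemma apply_right_eq_of_mem_Rtop {a : Fin m} {W W' : Tournament m} (hW : W ∈ Rtop a)
    (hW' : W' ∈ Rtop a) (b : Fin m) : W.1 b a = W'.1 b a := by
  rcases eq_or_ne b a with rfl | hb
  · rw [irrefl, irrefl]
  · rw [apply_swap W hb.symm, apply_swap W' hb.symm, apply_left_eq_of_mem_Rtop hW hW' b]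

lemma wsetT_flip_of_mem_Rtop {a : Fin m} {W W' : Tournament m} (hW : W ∈ Rtop a)
    (hW' : W' ∈ Rtop a) {n : ℕ} (P : Fin n → Tournament m) (B : Finset (Fin m)) :
    wsetT (fun i => flip W W' (P i)) B a = wsetT P B a := by
  simp only [wsetT, wpairT, flip_apply, apply_left_eq_of_mem_Rtop hW hW',
    apply_right_eq_of_mem_Rtop hW hW', Bool.xor_self, Bool.xor_false]

def raiseToTop (a : Fin m) (W : Tournament m) : Tournament m :=
  ⟨fun x y => if x = a then decide (y ≠ a) else if y = a then false else W.1 x y, by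
    intro x y
    refine ⟨by rintro rfl; by_cases hx : x = a <;> simp [hx, irrefl], fun hxy => ?_⟩
    by_cases hx : x = a <;> by_cases hy : y = a
    · exact absurd (hx.trans hy.symm) hxy
    all_goals simp [hx, hy, apply_swap W hxy.symm]⟩

lemma raiseToTop_mem_Rtop (a : Fin m) (W : Tournament m) : raiseToTop a W ∈ Rtop a :=
  fun b hb => by simp [raiseToTop, hb]

/-- Raising `a` to the top only changes the pairs `{a, b}` with `b ≻_W a`. -/
lemma indicator_sub_indicator_raiseToTop (a : Fin m) (V W : Tournament m) (x y : Fin m) :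
    ((if V.1 x y ∧ W.1 y x then 1 else 0) - if V.1 x y ∧ (raiseToTop a W).1 y x then 1 else 0 : ℤ)
      = (if x = a ∧ V.1 a y ∧ W.1 y a then 1 else 0) -
          if y = a ∧ V.1 x a ∧ W.1 x a then 1 else 0 := by
  by_cases hx : x = a <;> by_cases hy : y = a
  · subst hx hy; simp [irrefl]
  · subst hx; simp [raiseToTop, hy]
  · rw [hy, apply_swap W hx]
    cases V.1 x a <;> cases W.1 x a <;> simp [raiseToTop, hx]
  · simp [raiseToTop, hx, hy]

lemma KTt_sub_KTt_raiseToTop (a : Fin m) (V W : Tournament m) :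
    (KTt V W : ℤ) - KTt V (raiseToTop a W) =
      ∑ b ∈ univ.filter (W.1 · a), ((if V.1 a b then 1 else 0) - if V.1 b a then 1 else 0) := by
  simp only [KTt, natCast_card_filter, ← sum_sub_distrib]
  simp only [Fintype.sum_prod_type, indicator_sub_indicator_raiseToTop, sum_sub_distrib]
  simp only [ite_and, sum_ite_eq', mem_univ, if_true]
  rw [sum_comm (γ := Fin m)]
  simp only [sum_ite_eq', mem_univ, if_true, sum_filter, ← sum_sub_distrib]
  exact sum_congr rfl fun b _ => by split_ifs <;> rfl

end Tournament

section Condorcet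

open Tournament

variable {m n : ℕ} {φ : ℝ}

lemma sum_KTt_sub_sum_KTt_raiseToTop (a : Fin m) (W : Tournament m) (P : Fin n → Tournament m) :
    ∑ i, (KTt (P i) W : ℤ) - ∑ i, (KTt (P i) (raiseToTop a W) : ℤ) =
      -wsetT P (univ.filter (W.1 · a)) a := by
  simp only [← sum_sub_distrib, KTt_sub_KTt_raiseToTop, wsetT, wpairT, ← sum_neg_distrib]
  rw [sum_comm]
  refine sum_congr rfl fun b _ => ?_
  simp only [sum_sub_distrib, natCast_card_filter]
  ring

lemma condorcet_nonneg (hφ : 0 ≤ φ) (W : Tournament m) (P : Fin n → Tournament m) :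
    0 ≤ condorcet φ n W P :=
  prod_nonneg fun _ _ => div_nonneg (pow_nonneg hφ _) (sum_nonneg fun _ _ => pow_nonneg hφ _)

lemma sum_condorcet (hφ : 0 < φ) (W : Tournament m) : ∑ P, condorcet φ n W P = 1 := by
  have hZ : 0 < ∑ U, φ ^ KTt U W := sum_pos (fun _ _ => pow_pos hφ _) ⟨W, mem_univ W⟩
  simp only [condorcet]
  rw [← Fintype.prod_sum (fun (_ : Fin n) V => condorcet1 φ W V)]
  simp only [condorcet1, ← sum_div, div_self hZ.ne', prod_const_one]

lemma condorcet_eq_rpow_mul (hφ : 0 < φ) (W W' : Tournament m) (P : Fin n → Tournament m) :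
    condorcet φ n W P =
      φ ^ (∑ i, (KTt (P i) W : ℝ) - ∑ i, (KTt (P i) W' : ℝ)) * condorcet φ n W' P := by
  simp only [condorcet, condorcet1, sum_pow_KTt_eq φ W W', prod_div_distrib, prod_pow_eq_pow_sum]
  rw [Real.rpow_sub hφ, ← Nat.cast_sum, ← Nat.cast_sum, Real.rpow_natCast, Real.rpow_natCast]
  have : φ ^ ∑ i, KTt (P i) W' ≠ 0 := by positivity
  field_simp

lemma condorcet_eq_rpow_wsetT_mul (hφ : 0 < φ) (a : Fin m) (W : Tournament m)
    (P : Fin n → Tournament m) :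
    condorcet φ n W P = φ ^ (-(wsetT P (univ.filter (W.1 · a)) a : ℝ)) *
      condorcet φ n (raiseToTop a W) P := by
  rw [condorcet_eq_rpow_mul hφ W (raiseToTop a W)]
  congr 2
  exact_mod_cast sum_KTt_sub_sum_KTt_raiseToTop a W P

lemma size_eq_of_flip_invariant {W W' : Tournament m} {f : (Fin n → Tournament m) → ℝ}
    (hf : ∀ P, f (fun i => flip W W' (P i)) = f P) :
    Size (condorcet φ n) f W = Size (condorcet φ n) f W' :=
  Fintype.sum_equiv (Equiv.piCongrRight fun _ => (flip_involutive W W').toPerm) _ _ fun P => by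
    show _ = condorcet φ n W' (fun i => flip W W' (P i)) * f (fun i => flip W W' (P i))
    rw [condorcet_flip, hf]

lemma size_wTestT_eq_of_mem_Rtop {a : Fin m} {W W' : Tournament m} (hW : W ∈ Rtop a)
    (hW' : W' ∈ Rtop a) (B : Finset (Fin m)) (K Γ : ℝ) :
    Size (condorcet φ n) (wTestT n B a K Γ) W = Size (condorcet φ n) (wTestT n B a K Γ) W' :=
  size_eq_of_flip_invariant fun P => by simp only [wTestT, wsetT_flip_of_mem_Rtop hW hW']

lemma wTestT_eq_thresholdTest (B : Finset (Fin m)) (a : Fin m) (K Γ : ℝ) :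
    wTestT n B a K Γ = thresholdTest (fun P => (wsetT P B a : ℝ)) K Γ := rfl

end Condorcet

theorem stmt10_general (m n : ℕ) (φ : ℝ) (hφ0 : 0 < φ) (hφ1 : φ < 1)
    (α : ℝ) (hα0 : 0 < α) (hα1 : α < 1)
    (a : Fin m) (h₁ : Tournament m) :
    ∃ K Γ : ℝ, 0 ≤ Γ ∧ Γ ≤ 1 ∧
      SizeEq (condorcet φ n) (Rtop a)
        (wTestT n (Finset.univ.filter (fun b => h₁.1 b a = true)) a K Γ) α ∧
      IsMostPowerful (condorcet φ n) (Rtop a) h₁ α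
        (wTestT n (Finset.univ.filter (fun b => h₁.1 b a = true)) a K Γ) := by
  set B := univ.filter fun b => h₁.1 b a = true
  set h₀ := Tournament.raiseToTop a h₁
  have hh₀ : h₀ ∈ Rtop a := Tournament.raiseToTop_mem_Rtop a h₁
  obtain ⟨K, Γ, hΓ0, hΓ1, hsize⟩ := exists_thresholdTest_sum_mul_eq
    (fun P => (wsetT P B a : ℝ)) (sum_condorcet hφ0 h₀) hα0.le hα1.le
  rw [← wTestT_eq_thresholdTest] at hsize
  have hSize : SizeEq (condorcet φ n) (Rtop a) (wTestT n B a K Γ) α :=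
    ⟨fun W hW => (size_wTestT_eq_of_mem_Rtop hW hh₀ B K Γ).trans hsize |>.le, h₀, hh₀, hsize⟩
  refine ⟨K, Γ, hΓ0, hΓ1, hSize, isTest_thresholdTest _ hΓ0 hΓ1, hSize.1, fun g hg hgα => ?_⟩
  have hr : Monotone fun t : ℝ => φ ^ (-t) := fun s t hst =>
    Real.rpow_le_rpow_of_exponent_ge hφ0 hφ1.le (neg_le_neg hst)
  exact power_le_power_thresholdTest hr (Real.rpow_nonneg hφ0.le _)
    (condorcet_nonneg hφ0.le _) (condorcet_eq_rpow_wsetT_mul hφ0 a h₁) hg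
    ((hgα h₀ hh₀).trans hsize.ge)

/-- **A most powerful non-winner test for Condorcet.** For any `a`, any
`h₁ ∈ ℬ(𝒜)∖R_{a≻others}`, and any `0<α<1`, with `B = {b : b ≻_{h₁} a}`, there exist `K`
and `Γ ∈ [0,1]` such that the threshold test on `w_P(B≻a)` has size exactly `α` over
`H₀ = R_{a≻others}` and is a level-`α` most powerful test for `H₀` vs `h₁`. -/
theorem stmt10 (m n : ℕ) (hm : 2 ≤ m) (φ : ℝ) (hφ0 : 0 < φ) (hφ1 : φ < 1)
    (α : ℝ) (hα0 : 0 < α) (hα1 : α < 1)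
    (a : Fin m) (h₁ : Tournament m) (hh₁ : h₁ ∉ Rtop a) :
    ∃ K Γ : ℝ, 0 ≤ Γ ∧ Γ ≤ 1 ∧
      SizeEq (condorcet φ n) (Rtop a)
        (wTestT n (Finset.univ.filter (fun b => h₁.1 b a = true)) a K Γ) α ∧
      IsMostPowerful (condorcet φ n) (Rtop a) h₁ α
        (wTestT n (Finset.univ.filter (fun b => h₁.1 b a = true)) a K Γ) :=
  stmt10_general m n φ hφ0 hφ1 α hα0 hα1 a h₁

end Voting
end

section
/- Let ℳ_X = (𝒮,Θ,(π_θ)) be a finite statistical model with all probabilities strictly positive, H₀ ⊆ Θ, h₁ ∈ Θ∖H₀, t ∈ ℕ, Λ a probability distribution on H₀, and Λ* = Ext(Λ,h₁,t). Then for every x⃗ = (x_1,…,x_t) ∈ 𝒮^t, Σ_{j=1}^t Ratio_{Λ,h₁}(x_j)^{−1} = t · Ratio_{Λ*,h̄₁}(x⃗)^{−1}, where h̄₁ = (h₁,…,h₁), Ratio_{Λ,h₁}(x)^{−1} = (Σ_{h₀∈H₀} Λ(h₀)·π_{h₀}(x))/π_{h₁}(x), and Ratio_{Λ*,h̄₁}(x⃗)^{−1}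 = (Σ_{θ⃗∈Θ^t} Λ*(θ⃗)·π_{θ⃗}(x⃗))/π_{h̄₁}(x⃗) in the t-fold combined model (ℳ_X)^t. -/
namespace Voting

open Finset

/-- The `t`-fold combined model `(ℳ_X)^t`: parameter space `Θ^t`, sample space `𝒮^t`,
`π_{(θ_1,…,θ_t)}(P_1,…,P_t) = ∏_j π_{θ_j}(P_j)`. -/
noncomputable def combPow {S Θ : Type*} (π : Θ → S → ℝ) (t : ℕ) :
    (Fin t → Θ) → (Fin t → S) → ℝ :=
  fun θ P => ∏ j, π (θ j) (P j)

/-- `Ext Λ h1 t` : the extension of `Λ` to `Θ^t`, putting mass `Λ(θ)/t` on each vector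
whose `j`-th component is `θ` and whose other components are all `h1`. -/
noncomputable def Ext {Θ : Type*} [DecidableEq Θ] (Λ : Θ → ℝ) (h1 : Θ) (t : ℕ) :
    (Fin t → Θ) → ℝ :=
  fun v => ∑ j, if ∀ i, i ≠ j → v i = h1 then Λ (v j) / t else 0

/-- `Ext H0 h1 t = (H0 ∪ {h1})^t \ {(h1,…,h1)}`. -/
def ExtH0 {Θ : Type*} (H0 : Set Θ) (h1 : Θ) (t : ℕ) : Set (Fin t → Θ) :=
  {v | (∀ j, v j ∈ H0 ∨ v j = h1) ∧ v ≠ fun _ => h1}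


/-- **Claim about inverse likelihood ratios.** For every `x⃗ ∈ 𝒮^t`,
`Σ_{j=1}^t Ratio_{Λ,h₁}(x_j)⁻¹ = t · Ratio_{Ext(Λ,h₁,t),(h₁,…,h₁)}(x⃗)⁻¹`. -/
theorem stmt14 {S Θ : Type*} [Fintype S] [Fintype Θ] [DecidableEq Θ]
    (π : Θ → S → ℝ) (hπ : ∀ θ P, 0 < π θ P)
    (H₀ : Set Θ) (h₁ : Θ) (hh₁ : h₁ ∉ H₀) (Λ : Θ → ℝ) (hΛ : IsDistOn Λ H₀)
    (t : ℕ) (x : Fin t → S) :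
    ∑ j, (∑ θ, Λ θ * π θ (x j)) / π h₁ (x j) =
      (t : ℝ) *
        ((∑ v, Ext Λ h₁ t v * combPow π t v x) /
          combPow π t (fun _ => h₁) x) := by
  rcases Nat.eq_zero_or_pos t with ht | ht
  · subst ht; simp
  have htR : (t : ℝ) ≠ 0 := Nat.cast_ne_zero.mpr ht.ne'
  -- rewrite the numerator on the right
  have hnum : (∑ v, Ext Λ h₁ t v * combPow π t v x) =
      ∑ j, ∑ θ, Λ θ / t * (π θ (x j) * ∏ i ∈ Finset.univ.erase j, π h₁ (x i)) := by
    unfold Ext combPow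
    simp only [Finset.sum_mul]
    rw [Finset.sum_comm]
    refine Finset.sum_congr rfl fun j _ => ?_
    simp only [ite_mul, zero_mul]
    rw [← Finset.sum_filter]
    refine (Finset.sum_bij (i := fun (θ : Θ) _ => Function.update (fun _ => h₁) j θ)
      ?_ ?_ ?_ ?_).symm
    · intro θ _
      simp only [Finset.mem_filter, Finset.mem_univ, true_and]
      intro i hi
      exact Function.update_of_ne hi _ _
    · intro θ₁ _ θ₂ _ h
      have := congrFun h j
      simpa using this
    · intro v hv
      simp only [Finset.mem_filter, Finset.mem_univ, true_and] at hv
      refine ⟨v j, Finset.mem_univ _, ?_⟩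
      funext i
      by_cases hij : i = j
      · subst hij; simp
      · simp [Function.update_of_ne hij, hv i hij]
    · intro θ _
      rw [← Finset.mul_prod_erase _ _ (Finset.mem_univ j)]
      simp only [Function.update_self]
      congr 1
      congr 1
      refine Finset.prod_congr rfl fun i hi => ?_
      simp [Function.update_of_ne (Finset.ne_of_mem_erase hi)]
  rw [hnum]
  simp only [Finset.sum_div, Finset.mul_sum]
  refine Finset.sum_congr rfl fun j _ => ?_
  refine Finset.sum_congr rfl fun θ _ => ?_
  have hD : combPow π t (fun _ => h₁) x =
      π h₁ (x j) * ∏ i ∈ Finset.univ.erase j, π h₁ (x i) :=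
    (Finset.mul_prod_erase _ _ (Finset.mem_univ j)).symm
  rw [hD]
  have hP : (∏ i ∈ Finset.univ.erase j, π h₁ (x i)) ≠ 0 :=
    (Finset.prod_pos fun i _ => hπ _ _).ne'
  have hπj : π h₁ (x j) ≠ 0 := (hπ _ _).ne'
  field_simp


end Voting
end

section
/- Let (𝒮,Θ,(π_θ)) be a finite statistical model with all probabilities strictly positive, H₀ ⊆ Θ, h₁ ∈ Θ∖H₀, 0<η<1, and Λ a probability distribution on H₀. Let LR be a test of the form LR(P)=1 if Ratio_{Λ,h₁}(P)>k, LR(P)=0 if Ratio_{Λ,h₁}(P)<k, and LR(P)=γ if Ratio_{Λ,h₁}(P)=k, for some k ≥ 0 and γ ∈ [0,1]. If Σ_{h₀∈H₀} Λ(h₀)·Size(LR,h₀) = η, then Σ_{P∈𝒮} π_{h₁}(P)·LR(P) ≥ η; that is, the power of LR at h₁ is at least η. -/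
namespace Voting

open Finset

/-- **Claim: power of a likelihood ratio test dominates its mixed size.**
If the `Λ`-weighted size of a likelihood ratio test for `Λ` vs `h₁` equals `η`, then its
power at `h₁` is at least `η`. -/
theorem stmt15 {S Θ : Type*} [Fintype S] [Fintype Θ]
    (π : Θ → S → ℝ) (hπ : ∀ θ P, 0 < π θ P) (hprob : ∀ θ, ∑ P, π θ P = 1)
    (H₀ : Set Θ) (h₁ : Θ) (hh₁ : h₁ ∉ H₀) (Λ : Θ → ℝ) (hΛ : IsDistOn Λ H₀)
    (η : ℝ) (hη0 : 0 < η) (hη1 : η < 1)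
    (k γ : ℝ) (hk : 0 ≤ k) (hγ0 : 0 ≤ γ) (hγ1 : γ ≤ 1)
    (hsize : ∑ h₀, Λ h₀ * Size π (lrTest π Λ h₁ k γ) h₀ = η) :
    η ≤ Power π (lrTest π Λ h₁ k γ) h₁ := by
  obtain ⟨hΛ0, -, hΛ1⟩ := hΛ
  set q : S → ℝ := fun P => ∑ θ, Λ θ * π θ P with hq
  set f := lrTest π Λ h₁ k γ with hf
  have hqpos : ∀ P, 0 < q P := by
    intro P
    obtain ⟨θ₀, hθ₀⟩ : ∃ θ, 0 < Λ θ := by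
      by_contra h; push_neg at h
      have : ∑ θ, Λ θ = 0 :=
        Finset.sum_eq_zero fun θ _ => le_antisymm (h θ) (hΛ0 θ)
      rw [this] at hΛ1; norm_num at hΛ1
    exact Finset.sum_pos' (fun θ _ => mul_nonneg (hΛ0 θ) (hπ θ P).le)
      ⟨θ₀, Finset.mem_univ _, mul_pos hθ₀ (hπ θ₀ P)⟩
  have hmix : ∑ P, q P * f P = η := by
    rw [← hsize]
    simp only [Size, Finset.mul_sum]
    rw [Finset.sum_comm]
    apply Finset.sum_congr rfl
    intro P _
    simp only [hq, Finset.sum_mul]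
    apply Finset.sum_congr rfl
    intro θ _; ring
  have hqsum : ∑ P, q P = 1 := by
    simp only [hq]
    rw [Finset.sum_comm]
    calc ∑ θ, ∑ P, Λ θ * π θ P = ∑ θ, Λ θ * ∑ P, π θ P := by
          simp [Finset.mul_sum]
      _ = 1 := by simp [hprob, hΛ1]
  have key : ∀ P, 0 ≤ (π h₁ P - k * q P) * (f P - η) := by
    intro P
    have hratio : Ratio π Λ h₁ P = π h₁ P / q P := rfl
    rcases lt_trichotomy (Ratio π Λ h₁ P) k with h | h | h
    · have hfP : f P = 0 := by
        simp [hf, lrTest, h, not_lt.2 h.le]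
      have hlt : π h₁ P < k * q P := by
        rwa [hratio, div_lt_iff₀ (hqpos P)] at h
      rw [hfP]
      nlinarith
    · have heq : π h₁ P = k * q P := by
        rw [hratio, div_eq_iff (hqpos P).ne'] at h
        linarith
      rw [heq, sub_self, zero_mul]
    · have hfP : f P = 1 := by
        simp [hf, lrTest, h]
      have hgt : k * q P < π h₁ P := by
        rwa [hratio, lt_div_iff₀ (hqpos P)] at h
      rw [hfP]
      nlinarith
  have hsum : 0 ≤ ∑ P, (π h₁ P - k * q P) * (f P - η) :=
    Finset.sum_nonneg fun P _ => key P
  have expand : ∑ P, (π h₁ P - k * q P) * (f P - η)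
      = (∑ P, π h₁ P * f P) - η * (∑ P, π h₁ P)
        - k * (∑ P, q P * f P) + k * η * (∑ P, q P) := by
    simp only [Finset.mul_sum, ← Finset.sum_sub_distrib, ← Finset.sum_add_distrib]
    apply Finset.sum_congr rfl
    intro P _; ring
  rw [expand, hmix, hqsum, hprob h₁] at hsum
  simp only [Power]
  linarith


end Voting
end

section
/- Under Mallows' model with a single sample (n=1), for any number of alternatives m, any dispersion 0<φ<1, any ranking W ∈ ℒ(𝒜), any alternatives b,c ∈ 𝒜 with b ≻_W c, and any integer K, we have π_W({V ∈ ℒ(𝒜) : Borda_b(V) ≥ K}) ≥ π_W({V ∈ ℒ(𝒜) : Borda_c(V) ≥ K}). -/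
namespace Voting

open Finset

/-! The map `V ↦ V * swap b c` exchanges the positions of `b` and `c`: it is a bijection from the
rankings placing `b` above `c` onto those placing `c` above `b`, and it exchanges the Borda scores
of `b` and `c`. Pair each `V` with `b` above `c` with its image `V'`. Then `Borda_b V ≥ Borda_c V`,
and `V'` is at least as far from `W` as `V` because `b ≻_W c`: a pair that `V` orders against `W`
either stays so in `V'`, or its image under the transposition is ordered against `W` by `V'`.
Hence `π_W V' ≤ π_W V`, and within each pair the event `Borda_b ≥ K` carries at least the mass of
`Borda_c ≥ K`. -/

open Equiv

lemma card_le_card_of_mapsTo_sdiff {α : Type*} [DecidableEq α] {s t : Finset α} (f : α → α)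
    (hf : Set.InjOn f ↑(s \ t)) (hst : ∀ x ∈ s \ t, f x ∈ t \ s) : #s ≤ #t :=
  card_sdiff_le_card_sdiff_iff.mp (card_le_card_of_injOn f hst hf)

lemma sum_eq_sum_filter_add_sum_comp {α M : Type*} [Fintype α] [AddCommMonoid M]
    (τ : Perm α) (p : α → Prop) [DecidablePred p] (hp : ∀ x, p x ↔ ¬ p (τ x)) (f : α → M) :
    ∑ x, f x = ∑ x with p x, (f x + f (τ x)) := by
  rw [sum_add_distrib, ← sum_filter_add_sum_filter_not univ p]
  congr 1
  exact (sum_equiv τ (by simpa using hp) (fun _ _ => rfl)).symm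

lemma ite_add_ite_le_ite_add_ite {M : Type*} [AddCommMonoid M] [PartialOrder M]
    [IsOrderedAddMonoid M] {P Q : Prop} [Decidable P] [Decidable Q] {x y : M}
    (hQP : Q → P) (hyx : y ≤ x) :
    (if Q then x else 0) + (if P then y else 0) ≤ (if P then x else 0) + (if Q then y else 0) := by
  split_ifs <;> simp_all

lemma swap_apply_lt_swap_apply_of_swap_apply_le {α β : Type*} [DecidableEq α] [LinearOrder β]
    {v w : α → β} {b c x y : α} (hv : v b < v c) (hw : w b < w c)
    (hvxy : v x < v y) (hwxy : w y < w x) (hflip : v (swap b c y) ≤ v (swap b c x)) :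
    w (swap b c y) < w (swap b c x) := by
  simp only [swap_apply_def] at hflip ⊢
  split_ifs at hflip ⊢ <;> subst_vars <;> order

lemma KT_le_KT_mul_swap {m : ℕ} {V W : Ranking m} {b c : Fin m}
    (hV : V b < V c) (hW : W b < W c) : KT V W ≤ KT (V * swap b c) W := by
  unfold KT
  refine card_le_card_of_mapsTo_sdiff _ ((swap b c).prodCongr (swap b c)).injective.injOn ?_
  rintro ⟨x, y⟩ hxy
  simp only [mem_sdiff, mem_filter, mem_univ, true_and] at hxy ⊢
  simp only [Perm.mul_apply, prodCongr_apply, Prod.map, swap_apply_self] at hxy ⊢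
  obtain ⟨⟨hvxy, hwxy⟩, hkept⟩ := hxy
  have hflip : V (swap b c y) ≤ V (swap b c x) := not_lt.mp fun h => hkept ⟨h, hwxy⟩
  exact ⟨⟨hvxy, swap_apply_lt_swap_apply_of_swap_apply_le hV hW hvxy hwxy hflip⟩,
    fun h => not_lt_of_ge hflip h.1⟩

lemma lt_iff_not_mul_swap_apply_lt {m : ℕ} (V : Ranking m) {b c : Fin m} (hne : b ≠ c) :
    V b < V c ↔ ¬ (V * swap b c) b < (V * swap b c) c := by
  simp only [Perm.mul_apply, swap_apply_left, swap_apply_right, not_lt]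
  exact ⟨le_of_lt, fun h => h.lt_of_ne (V.injective.ne hne)⟩

lemma Borda_mul {m : ℕ} (a : Fin m) (V σ : Ranking m) : Borda a (V * σ) = Borda (σ a) V :=
  card_equiv σ fun _ => by simp only [mem_filter, mem_univ, true_and]; rfl

lemma Borda_le_Borda_of_lt {m : ℕ} {V : Ranking m} {b c : Fin m} (h : V b < V c) :
    Borda c V ≤ Borda b V :=
  card_le_card (monotone_filter_right _ fun _ _ => h.trans)

lemma mallows1_le_mallows1_of_KT_le {m : ℕ} {φ : ℝ} (hφ0 : 0 ≤ φ) (hφ1 : φ ≤ 1)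
    {W U V : Ranking m} (h : KT U W ≤ KT V W) : mallows1 φ W V ≤ mallows1 φ W U :=
  div_le_div_of_nonneg_right (pow_le_pow_of_le_one hφ0 hφ1 h)
    (sum_nonneg fun _ _ => pow_nonneg hφ0 _)

/-- **Borda dominance lemma.** Under Mallows' model with a single sample,
if `b ≻_W c` then `π_W({V : Borda_b(V) ≥ K}) ≥ π_W({V : Borda_c(V) ≥ K})`. -/
theorem stmt16 (m : ℕ) (φ : ℝ) (hφ0 : 0 < φ) (hφ1 : φ < 1)
    (W : Ranking m) (b c : Fin m) (hbc : W b < W c) (K : ℤ) :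
    ∑ V ∈ Finset.univ.filter (fun V : Ranking m => K ≤ (Borda c V : ℤ)),
        mallows1 φ W V ≤
      ∑ V ∈ Finset.univ.filter (fun V : Ranking m => K ≤ (Borda b V : ℤ)),
        mallows1 φ W V := by
  have hpair (V : Ranking m) := lt_iff_not_mul_swap_apply_lt V (ne_of_apply_ne W hbc.ne)
  rw [sum_filter, sum_filter, sum_eq_sum_filter_add_sum_comp (Equiv.mulRight (swap b c)) _ hpair,
    sum_eq_sum_filter_add_sum_comp (Equiv.mulRight (swap b c)) _ hpair]
  refine sum_le_sum fun V hV => ?_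
  have hbV : V b < V c := (mem_filter.mp hV).2
  have hBorda : (Borda c V : ℤ) ≤ Borda b V := by exact_mod_cast Borda_le_Borda_of_lt hbV
  simp only [coe_mulRight, Borda_mul, swap_apply_left, swap_apply_right]
  exact ite_add_ite_le_ite_add_ite (fun h => h.trans hBorda)
    (mallows1_le_mallows1_of_KT_le hφ0.le hφ1.le (KT_le_KT_mul_swap hbV hbc))

end Voting
end
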